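/- arXiv:2602.11493 — 2 statements merged into one kernel-verified Lean document; each statement's English description precedes it below -/
import Mathlib

section
/- A third-order quaternion tensor H ∈ ℍ^{n×n×n₃} is Hermitian (i.e., H* = H) if and only if the quaternion matrix bcirc_z(H) is Hermitian (i.e., bcirc_z(H)* = bcirc_z(H)). -/
open Matrix Kronecker

noncomputable section

/-- The real quaternions. -/
abbrev Quat := Quaternion ℝ

/-- The embedding of `ℂ` into the quaternions (via `1` and `i`). -/
def c2q (z : ℂ) : Quat := ⟨z.re, z.im, 0, 0⟩

/-- The quaternion imaginary unit `j`. -/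
def jH : Quat := ⟨0, 0, 1, 0⟩

/-- The first complex component of a quaternion: `q = c2q (qd q) + jH * c2q (qc q)`. -/
def qd (q : Quat) : ℂ := ⟨q.re, q.imI⟩

/-- The second complex component of a quaternion. -/
def qc (q : Quat) : ℂ := ⟨q.imJ, -q.imK⟩

/-- A third-order tensor, given by its family of frontal slices. -/
abbrev Tensor (α : Type*) (n₁ n₂ n₃ : ℕ) := Fin n₃ → Matrix (Fin n₁) (Fin n₂) α

/-- The complex tensor `A_d` in the decomposition `A = A_d + j·A_c`. -/
def Td {n₁ n₂ n₃ : ℕ} (A : Tensor Quat n₁ n₂ n₃) : Tensor ℂ n₁ n₂ n₃ :=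
  fun k i j => qd (A k i j)

/-- The complex tensor `A_c` in the decomposition `A = A_d + j·A_c`. -/
def Tc {n₁ n₂ n₃ : ℕ} (A : Tensor Quat n₁ n₂ n₃) : Tensor ℂ n₁ n₂ n₃ :=
  fun k i j => qc (A k i j)

/-- The normalized `n × n` DFT matrix (0-indexed). -/
def Fmat (n : ℕ) : Matrix (Fin n) (Fin n) ℂ :=
  fun s t => (((Real.sqrt (n : ℝ)) : ℂ))⁻¹ *
    Complex.exp ((-2 * (Real.pi : ℂ) * Complex.I * ((s : ℕ) : ℂ) * ((t : ℕ) : ℂ)) / (n : ℂ))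

/-- The flip permutation matrix `P_n` (0-indexed: `P_{s,t} = 1` iff `s + t ≡ 0 (mod n)`). -/
def Pmat (n : ℕ) : Matrix (Fin n) (Fin n) ℂ :=
  fun s t => if ((s : ℕ) + (t : ℕ)) % n = 0 then 1 else 0

/-- Left scalar multiplication of a quaternion matrix by a quaternion. -/
def lsmul {m n : Type*} (q : Quat) (M : Matrix m n Quat) : Matrix m n Quat :=
  fun i j => q * M i j

/-- Right scalar multiplication of a quaternion matrix by a quaternion. -/
def rsmul {m n : Type*} (q : Quat) (M : Matrix m n Quat) : Matrix m n Quat :=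
  fun i j => M i j * q

/-- The block circulant matrix of a third-order tensor. -/
def bcirc {α : Type*} {n₁ n₂ n₃ : ℕ} (T : Tensor α n₁ n₂ n₃) :
    Matrix (Fin n₃ × Fin n₁) (Fin n₃ × Fin n₂) α :=
  fun p q => T (p.1 - q.1) p.2 q.2

/-- The z-block circulant matrix `bcirc_z(A) = bcirc(A_d) + j·bcirc(A_c)·(P_{n₃} ⊗ I_{n₂})`. -/
def bcircz {n₁ n₂ n₃ : ℕ} (A : Tensor Quat n₁ n₂ n₃) :
    Matrix (Fin n₃ × Fin n₁) (Fin n₃ × Fin n₂) Quat :=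
  (bcirc (Td A)).map c2q +
    lsmul jH ((bcirc (Tc A) * (Pmat n₃ ⊗ₖ (1 : Matrix (Fin n₂) (Fin n₂) ℂ))).map c2q)

/-- `unfold`: stack the frontal slices vertically. -/
def unfoldT {α : Type*} {n₁ n₂ n₃ : ℕ} (T : Tensor α n₁ n₂ n₃) :
    Matrix (Fin n₃ × Fin n₁) (Fin n₂) α :=
  fun p j => T p.1 p.2 j

/-- `fold`: the inverse of `unfold`. -/
def foldT {α : Type*} {n₁ n₂ n₃ : ℕ} (M : Matrix (Fin n₃ × Fin n₁) (Fin n₂) α) :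
    Tensor α n₁ n₂ n₃ :=
  fun k i j => M (k, i) j

/-- The QT-product `A *_Q B = fold(bcirc_z(A)·unfold(B))`. -/
def qtmul {n₁ r n₂ n₃ : ℕ} (A : Tensor Quat n₁ r n₃) (B : Tensor Quat r n₂ n₃) :
    Tensor Quat n₁ n₂ n₃ :=
  foldT (bcircz A * unfoldT B)

/-- The mode-3 quaternion DFT
`Â(i,j,:) = √n₃·F_{n₃}·A_d(i,j,:) + j·√n₃·P_{n₃}·F_{n₃}·A_c(i,j,:)`, tube-wise. -/
def hatT {n₁ n₂ n₃ : ℕ} (A : Tensor Quat n₁ n₂ n₃) : Tensor Quat n₁ n₂ n₃ :=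
  fun k i j =>
    c2q (((Real.sqrt (n₃ : ℝ)) : ℂ) * ∑ t, Fmat n₃ k t * Td A t i j) +
    jH * c2q (((Real.sqrt (n₃ : ℝ)) : ℂ) * ∑ t, (Pmat n₃ * Fmat n₃) k t * Tc A t i j)

/-- `diag(Â)`: the block diagonal matrix with the frontal slices as diagonal blocks. -/
def blkDiag {α : Type*} [Zero α] {n₁ n₂ n₃ : ℕ} (T : Tensor α n₁ n₂ n₃) :
    Matrix (Fin n₃ × Fin n₁) (Fin n₃ × Fin n₂) α :=
  fun p q => if p.1 = q.1 then T p.1 p.2 q.2 else 0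

/-- Conjugate transpose of a complex tensor: conjugate-transpose each slice and
reverse the order of slices `2,…,n₃` (i.e. slice `k ↦ -k` in 0-indexing). -/
def cConjT {n₁ n₂ n₃ : ℕ} (T : Tensor ℂ n₁ n₂ n₃) : Tensor ℂ n₂ n₁ n₃ :=
  fun k => (T (-k))ᴴ

/-- Conjugate transpose of a quaternion tensor, defined by
`unfold(A*) = unfold(A_d*) − (P_{n₃} ⊗ I_{n₂})·unfold(A_c*)·j`. -/
def tConjT {n₁ n₂ n₃ : ℕ} (A : Tensor Quat n₁ n₂ n₃) : Tensor Quat n₂ n₁ n₃ :=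
  foldT ((unfoldT (cConjT (Td A))).map c2q -
    rsmul jH (((Pmat n₃ ⊗ₖ (1 : Matrix (Fin n₂) (Fin n₂) ℂ)) *
      unfoldT (cConjT (Tc A))).map c2q))

/-- The identity tensor: identity matrix as first frontal slice, zero elsewhere. -/
def idT (n n₃ : ℕ) : Tensor Quat n n n₃ :=
  fun k => if (k : ℕ) = 0 then (1 : Matrix (Fin n) (Fin n) Quat) else 0

/-- A quaternion tensor is unitary if `U* *_Q U = U *_Q U* = I`. -/
def IsUnitaryT {n n₃ : ℕ} (U : Tensor Quat n n n₃) : Prop :=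
  qtmul (tConjT U) U = idT n n₃ ∧ qtmul U (tConjT U) = idT n n₃

/-- A quaternion tensor is Hermitian if `H* = H`. -/
def IsHermitianT {n n₃ : ℕ} (H : Tensor Quat n n n₃) : Prop := tConjT H = H

/-- A quaternion matrix `M` is positive semidefinite if `x*·M·x` is a nonnegative
real number for every quaternion vector `x`. -/
def IsPSDMat {m : Type*} [Fintype m] (M : Matrix m m Quat) : Prop :=
  ∀ x : m → Quat, ∃ r : ℝ, 0 ≤ r ∧ (star x) ⬝ᵥ M.mulVec x = (r : Quat)


/-- decomposition helper -/
def decq (z w : ℂ) : Quat := ⟨z.re, z.im, w.re, -w.im⟩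

lemma decq_eq (z w : ℂ) : c2q z + jH * c2q w = decq z w := by
  ext <;> simp only [Quaternion.re_add, Quaternion.imI_add, Quaternion.imJ_add, Quaternion.imK_add, Quaternion.re_mul, Quaternion.imI_mul, Quaternion.imJ_mul, Quaternion.imK_mul] <;> simp [c2q, jH, decq]

lemma decq_inj {z w z' w' : ℂ} : decq z w = decq z' w' ↔ z = z' ∧ w = w' := by
  rw [Quaternion.ext_iff]; simp [decq, Complex.ext_iff, and_assoc, neg_inj]

lemma star_decq (z w : ℂ) : star (decq z w) = decq (starRingEnd ℂ z) (-w) := by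
  ext <;> simp only [Quaternion.re_star, Quaternion.imI_star, Quaternion.imJ_star, Quaternion.imK_star] <;> simp [decq]

lemma sub_decq (z w : ℂ) : c2q z - c2q w * jH = decq z (-(starRingEnd ℂ w)) := by
  ext <;> simp only [Quaternion.re_sub, Quaternion.imI_sub, Quaternion.imJ_sub, Quaternion.imK_sub, Quaternion.re_mul, Quaternion.imI_mul, Quaternion.imJ_mul, Quaternion.imK_mul] <;> simp [c2q, jH, decq]

lemma Pmat_apply {n₃ : ℕ} [NeZero n₃] (u t : Fin n₃) :
    Pmat n₃ u t = if u = -t then 1 else 0 := by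
  unfold Pmat
  congr 1
  simp only [eq_iff_iff]
  rw [eq_neg_iff_add_eq_zero, Fin.ext_iff, Fin.val_zero, Fin.val_add]

lemma bcirc_mul_kron {n n₃ : ℕ} [NeZero n₃] (T : Tensor ℂ n n n₃) (s t : Fin n₃) (i j : Fin n) :
    (bcirc T * (Pmat n₃ ⊗ₖ (1 : Matrix (Fin n) (Fin n) ℂ))) (s, i) (t, j) = T (s + t) i j := by
  rw [Matrix.mul_apply, Finset.sum_eq_single ((-t : Fin n₃), j)]
  · simp [bcirc, kroneckerMap_apply, Pmat_apply, Matrix.one_apply, sub_neg_eq_add]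
  · rintro ⟨u, l⟩ - hb
    simp only [kroneckerMap_apply, Pmat_apply, Matrix.one_apply]
    rcases eq_or_ne u (-t) with h1 | h1
    · rcases eq_or_ne l j with h2 | h2
      · exact absurd (by rw [h1, h2]) hb
      · simp [h2]
    · simp [h1]
  · simp

lemma kron_mul_unfold {n n₃ : ℕ} [NeZero n₃] (S : Tensor ℂ n n n₃) (k : Fin n₃) (i : Fin n) (j : Fin n) :
    ((Pmat n₃ ⊗ₖ (1 : Matrix (Fin n) (Fin n) ℂ)) * unfoldT S) (k, i) j = S (-k) i j := by
  rw [Matrix.mul_apply, Finset.sum_eq_single ((-k : Fin n₃), i)]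
  · simp [unfoldT, kroneckerMap_apply, Pmat_apply, Matrix.one_apply]
  · rintro ⟨u, l⟩ - hb
    simp only [kroneckerMap_apply, Pmat_apply, Matrix.one_apply]
    rcases eq_or_ne k (-u) with h1 | h1
    · rcases eq_or_ne i l with h2 | h2
      · exact absurd (by rw [← h2, show u = -k from by rw [h1, neg_neg]]) hb
      · simp [h2]
    · simp [h1]
  · simp

lemma bcircz_apply {n n₃ : ℕ} [NeZero n₃] (H : Tensor Quat n n n₃) (s t : Fin n₃) (i j : Fin n) :
    bcircz H (s, i) (t, j) = decq (Td H (s - t) i j) (Tc H (s + t) i j) := by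
  show c2q _ + jH * c2q _ = _
  rw [bcirc_mul_kron, decq_eq]
  rfl

lemma tConjT_apply {n n₃ : ℕ} [NeZero n₃] (H : Tensor Quat n n n₃) (k : Fin n₃) (i j : Fin n) :
    tConjT H k i j = decq (starRingEnd ℂ (Td H (-k) j i)) (-(Tc H k j i)) := by
  have : tConjT H k i j = c2q (cConjT (Td H) k i j) -
      c2q (((Pmat n₃ ⊗ₖ (1 : Matrix (Fin n) (Fin n) ℂ)) * unfoldT (cConjT (Tc H))) (k, i) j) * jH := rfl
  rw [this, kron_mul_unfold, sub_decq]
  simp [cConjT, Matrix.conjTranspose_apply]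


lemma decq_qdqc (q : Quat) : decq (qd q) (qc q) = q := by
  ext <;> simp [decq, qd, qc]

lemma herm_comp {n n₃ : ℕ} [NeZero n₃] (H : Tensor Quat n n n₃) :
    IsHermitianT H ↔ ∀ (k : Fin n₃) (i j : Fin n),
      starRingEnd ℂ (Td H (-k) j i) = Td H k i j ∧ -(Tc H k j i) = Tc H k i j := by
  unfold IsHermitianT
  constructor
  · intro h k i j
    have hk := congrFun (congrFun (congrFun h k) i) j
    rw [tConjT_apply, show H k i j = decq (Td H k i j) (Tc H k i j) from (decq_qdqc _).symm,
      decq_inj] at hk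
    exact hk
  · intro h
    funext k i j
    rw [tConjT_apply, (h k i j).1, (h k i j).2]
    exact decq_qdqc _

/-- `H` is a Hermitian tensor iff `bcirc_z(H)` is a Hermitian matrix. -/
theorem stmt4 {n n₃ : ℕ} (H : Tensor Quat n n n₃) :
    IsHermitianT H ↔ (bcircz H)ᴴ = bcircz H := by
  rcases Nat.eq_zero_or_pos n₃ with h0 | hpos
  · constructor <;> intro _
    · apply Matrix.ext
      rintro ⟨s, i⟩ -
      exact absurd s.2 (by omega)
    · funext k
      exact absurd k.2 (by omega)
  · haveI : NeZero n₃ := ⟨hpos.ne'⟩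
    rw [herm_comp]
    constructor
    · intro h
      apply Matrix.ext
      rintro ⟨s, i⟩ ⟨t, j⟩
      rw [Matrix.conjTranspose_apply, bcircz_apply, bcircz_apply, star_decq, decq_inj]
      refine ⟨?_, ?_⟩
      · rw [show t - s = -(s - t) from (neg_sub s t).symm]
        exact (h (s - t) i j).1
      · rw [add_comm t s]
        exact (h (s + t) i j).2
    · intro h k i j
      have hq := congrFun (congrFun h ((k : Fin n₃), i)) ((0 : Fin n₃), j)
      rw [Matrix.conjTranspose_apply, bcircz_apply, bcircz_apply, star_decq, decq_inj] at hq
      simp only [zero_sub, sub_zero, zero_add, add_zero] at hq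
      exact hq

end
end

section
/- (QT-PLU decomposition) Let A ∈ ℍ^{n×n×n₃} be a third-order quaternion tensor. Then there exist a quaternion tensor P ∈ ℍ^{n×n×n₃} whose mode-3 quaternion DFT is an f-permutation tensor, a unit f-lower-triangular quaternion tensor L ∈ ℍ^{n×n×n₃}, and an f-upper-triangular quaternion tensor U ∈ ℍ^{n×n×n₃} such that P *_Q A = L *_Q U. -/
open Matrix Kronecker

noncomputable section

/-! ### Auxiliary machinery -/

section Aux

open Complex

/-- `c2q` as a ring homomorphism. -/
def c2qHom : ℂ →+* Quat where
  toFun := c2q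
  map_one' := by ext <;> simp [c2q, Quaternion.re_one, Quaternion.imI_one, Quaternion.imJ_one, Quaternion.imK_one]
  map_mul' := fun z w => by ext <;> simp [Quaternion.re_mul, Quaternion.imI_mul, Quaternion.imJ_mul, Quaternion.imK_mul] <;> simp [c2q, Complex.mul_re, Complex.mul_im]
  map_zero' := by ext <;> simp [c2q, Quaternion.re_zero, Quaternion.imI_zero, Quaternion.imJ_zero, Quaternion.imK_zero]
  map_add' := fun z w => by ext <;> simp [Quaternion.re_add, Quaternion.imI_add, Quaternion.imJ_add, Quaternion.imK_add] <;> simp [c2q]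

lemma c2q_eq : c2q = c2qHom := rfl

lemma c2q_mul (z w : ℂ) : c2q (z * w) = c2q z * c2q w := map_mul c2qHom z w
lemma c2q_add (z w : ℂ) : c2q (z + w) = c2q z + c2q w := map_add c2qHom z w
lemma c2q_one : c2q 1 = 1 := map_one c2qHom
lemma c2q_zero : c2q 0 = 0 := map_zero c2qHom
lemma c2q_natCast (m : ℕ) : c2q (m : ℂ) = (m : Quat) := map_natCast c2qHom m

lemma c2q_sum {ι : Type*} (s : Finset ι) (f : ι → ℂ) :
    c2q (∑ x ∈ s, f x) = ∑ x ∈ s, c2q (f x) := map_sum c2qHom f s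

lemma c2q_comm (z w : ℂ) : c2q z * c2q w = c2q w * c2q z := by
  rw [← c2q_mul, ← c2q_mul, mul_comm]

lemma c2q_mul_jH (z : ℂ) : c2q z * jH = jH * c2q ((starRingEnd ℂ) z) := by
  ext <;> simp [Quaternion.re_mul, Quaternion.imI_mul, Quaternion.imJ_mul, Quaternion.imK_mul] <;> simp [c2q, jH]

lemma q_decomp (q : Quat) : c2q (qd q) + jH * c2q (qc q) = q := by
  ext <;> simp [Quaternion.re_mul, Quaternion.imI_mul, Quaternion.imJ_mul, Quaternion.imK_mul] <;> simp [c2q, jH, qd, qc]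

/-- The root-of-unity exponential `e(m) = exp(-2πi/n)^m`. -/
noncomputable def eE (n : ℕ) (m : ℤ) : ℂ := Complex.exp (-2 * Real.pi * Complex.I / n) ^ m

lemma eE_add (n : ℕ) (a b : ℤ) : eE n (a+b) = eE n a * eE n b :=
  zpow_add₀ (Complex.exp_ne_zero _) a b

lemma eE_zero (n : ℕ) : eE n 0 = 1 := zpow_zero _

lemma eE_zpow (n : ℕ) (a b : ℤ) : eE n (a*b) = (eE n a)^b := by
  rw [eE, _root_.zpow_mul]; rfl

lemma eE_n (n : ℕ) (hn : 0 < n) : eE n n = 1 := by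
  have h : ((n:ℂ)) ≠ 0 := by exact_mod_cast hn.ne'
  rw [eE, zpow_natCast, ← Complex.exp_nat_mul]
  have : (n:ℂ) * (-2 * Real.pi * Complex.I / n) = (-1 : ℤ) * (2 * Real.pi * Complex.I) := by
    field_simp; ring
  rw [this, Complex.exp_int_mul_two_pi_mul_I]

lemma eE_nmul (n : ℕ) (hn : 0 < n) (q : ℤ) : eE n ((n:ℤ) * q) = 1 := by
  rw [eE_zpow, eE_n n hn, _root_.one_zpow]

lemma eE_congr {n : ℕ} (hn : 0 < n) {a b : ℤ} (h : (n:ℤ) ∣ a - b) : eE n a = eE n b := by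
  obtain ⟨q, hq⟩ := h
  have ha : a = b + (n:ℤ) * q := by omega
  rw [ha, eE_add, eE_nmul n hn, mul_one]

lemma eE_conj (n : ℕ) (m : ℤ) : (starRingEnd ℂ) (eE n m) = eE n (-m) := by
  rw [eE, map_zpow₀, ← Complex.exp_conj, eE, _root_.zpow_neg, ← _root_.inv_zpow, ← Complex.exp_neg]
  congr 2
  rw [map_div₀]
  simp only [_root_.map_mul, map_neg, Complex.conj_I, Complex.conj_ofReal, map_ofNat,
    map_natCast]
  ring

lemma eE_nat (n : ℕ) (a : ℕ) : eE n a = Complex.exp (-2 * Real.pi * Complex.I * a / n) := by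
  rw [eE, zpow_natCast, ← Complex.exp_nat_mul]
  congr 1
  ring

lemma orth (n : ℕ) (hn : 0 < n) (d : ℤ) :
    ∑ t : Fin n, eE n (d * t) = if (n:ℤ) ∣ d then (n:ℂ) else 0 := by
  have hstep : ∀ t : Fin n, eE n (d * t) = (eE n d) ^ (t:ℕ) := by
    intro t
    rw [eE_zpow, zpow_natCast]
  simp_rw [hstep]
  rw [Fin.sum_univ_eq_sum_range]
  by_cases hd : (n:ℤ) ∣ d
  · have : eE n d = 1 := by
      obtain ⟨q, hq⟩ := hd
      rw [hq, eE_nmul n hn]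
    simp [this, hd]
  · have h1 : eE n d ≠ 1 := by
      intro h
      apply hd
      rw [eE, ← Complex.exp_int_mul, Complex.exp_eq_one_iff] at h
      obtain ⟨k, hk⟩ := h
      have hπ : (Real.pi : ℂ) ≠ 0 := by exact_mod_cast Real.pi_ne_zero
      have hI : Complex.I ≠ 0 := Complex.I_ne_zero
      have hn' : ((n:ℂ)) ≠ 0 := by exact_mod_cast hn.ne'
      have hc : (d : ℂ) = (-k) * n := by
        field_simp at hk
        have h2πI : (2 * (Real.pi:ℂ) * Complex.I) ≠ 0 := by
          simp [hπ, hI]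
        apply mul_right_cancel₀ h2πI
        linear_combination (-(2 * (Real.pi:ℂ) * Complex.I)) * hk
      have : d = -k * n := by exact_mod_cast hc
      exact ⟨-k, by rw [this]; ring⟩
    rw [geom_sum_eq h1]
    have hpn : eE n d ^ n = 1 := by
      rw [← zpow_natCast, ← eE_zpow, mul_comm, eE_nmul n hn]
    rw [hpn]
    simp [hd]

variable {n₃ : ℕ}

/-- mod-sub divisibility for Fin values. -/
lemma fin_add_dvd (hn : 0 < n₃) (s t : Fin n₃) :
    (n₃:ℤ) ∣ (((s + t : Fin n₃) : ℕ) : ℤ) - ((s:ℕ) + (t:ℕ)) := by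
  rw [Fin.val_add]
  push_cast
  set x : ℤ := (s:ℕ) + (t:ℕ) with hx
  refine ⟨-(x / ↑n₃), ?_⟩
  rw [Int.emod_def]
  ring

lemma fin_sub_dvd (hn : 0 < n₃) (s t : Fin n₃) :
    (n₃:ℤ) ∣ (((s - t : Fin n₃) : ℕ) : ℤ) - ((s:ℕ) - (t:ℕ)) := by
  haveI : NeZero n₃ := ⟨hn.ne'⟩
  have h : ((s - t) + t : Fin n₃) = s := sub_add_cancel s t
  have h2 := fin_add_dvd hn (s - t) t
  rw [h] at h2
  have heq : (((s - t : Fin n₃) : ℕ) : ℤ) - ((s:ℕ) - (t:ℕ)) =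
      -((((s:ℕ):ℕ):ℤ) - ((((s - t : Fin n₃):ℕ):ℤ) + ((t:ℕ):ℤ))) := by push_cast; ring
  rw [heq]
  exact dvd_neg.mpr h2

lemma fin_neg_dvd (hn : 0 < n₃) (k : Fin n₃) :
    (n₃:ℤ) ∣ (((-k : Fin n₃) : ℕ) : ℤ) + (k:ℕ) := by
  haveI : NeZero n₃ := ⟨hn.ne'⟩
  have h : ((-k) + k : Fin n₃) = 0 := neg_add_cancel k
  have h2 := fin_add_dvd hn (-k) k
  rw [h] at h2
  simp only [Fin.val_zero] at h2
  have heq : (((-k : Fin n₃) : ℕ) : ℤ) + ((k:ℕ):ℤ) =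
      -((((0:ℕ)):ℤ) - ((((-k : Fin n₃):ℕ):ℤ) + ((k:ℕ):ℤ))) := by push_cast; ring
  rw [heq]
  exact dvd_neg.mpr h2

lemma fin_eq_of_dvd (hn : 0 < n₃) (k l : Fin n₃) (h : (n₃:ℤ) ∣ ((k:ℕ):ℤ) - ((l:ℕ):ℤ)) :
    k = l := by
  have hk : ((k:ℕ):ℤ) < n₃ := by exact_mod_cast k.isLt
  have hl : ((l:ℕ):ℤ) < n₃ := by exact_mod_cast l.isLt
  have hk0 : (0:ℤ) ≤ ((k:ℕ):ℤ) := by positivity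
  have hl0 : (0:ℤ) ≤ ((l:ℕ):ℤ) := by positivity
  have habs : |((k:ℕ):ℤ) - ((l:ℕ):ℤ)| < (n₃:ℤ) := abs_lt.mpr ⟨by omega, by omega⟩
  have h0 := Int.eq_zero_of_abs_lt_dvd h habs
  exact Fin.ext (by omega)

lemma pmat_iff (hn : 0 < n₃) (s t : Fin n₃) :
    ((s:ℕ) + (t:ℕ)) % n₃ = 0 ↔ s = -t := by
  haveI : NeZero n₃ := ⟨hn.ne'⟩
  rw [← Fin.val_add, ← Fin.val_zero n₃]
  constructor
  · intro h
    have : s + t = 0 := Fin.ext h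
    exact eq_neg_of_add_eq_zero_left this
  · intro h
    rw [h, neg_add_cancel]

end Aux


section Hat

open Complex

variable {n₃ : ℕ}

lemma sqrt_ne (hn : 0 < n₃) : ((Real.sqrt (n₃:ℝ) : ℝ) : ℂ) ≠ 0 := by
  have : Real.sqrt (n₃:ℝ) ≠ 0 := by
    positivity
  exact_mod_cast this

lemma sqrtF (hn : 0 < n₃) (k t : Fin n₃) :
    ((Real.sqrt (n₃:ℝ) : ℝ) : ℂ) * Fmat n₃ k t = eE n₃ ((k:ℕ) * (t:ℕ)) := by
  rw [Fmat, ← mul_assoc, mul_inv_cancel₀ (sqrt_ne hn), one_mul]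
  rw [show (((k:ℕ):ℤ) * ((t:ℕ):ℤ)) = (((k:ℕ) * (t:ℕ) : ℕ):ℤ) by push_cast; ring, eE_nat]
  congr 1
  push_cast
  ring

lemma pmatF (hn : 0 < n₃) (k t : Fin n₃) :
    (Pmat n₃ * Fmat n₃) k t = Fmat n₃ (-k) t := by
  haveI : NeZero n₃ := ⟨hn.ne'⟩
  rw [Matrix.mul_apply]
  rw [Finset.sum_eq_single (-k)]
  · have : (((k:ℕ) + ((-k : Fin n₃):ℕ)) % n₃ = 0) := by
      rw [pmat_iff hn k (-k)]
      rw [neg_neg]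
    rw [Pmat]
    simp only [this, if_true, one_mul]
  · intro s _ hs
    have : ¬ (((k:ℕ) + (s:ℕ)) % n₃ = 0) := by
      rw [pmat_iff hn k s]
      intro h
      exact hs (by rw [h, neg_neg])
    rw [Pmat]
    simp only [this, if_false, zero_mul]
  · intro h
    exact absurd (Finset.mem_univ _) h

lemma c2q_mul_q (z : ℂ) (q : Quat) :
    c2q z * q = c2q (z * qd q) + jH * c2q ((starRingEnd ℂ) z * qc q) := by
  conv_lhs => rw [← q_decomp q]
  rw [mul_add, ← mul_assoc, c2q_mul_jH, c2q_mul, c2q_mul, mul_assoc]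

lemma hat_eq {n₁ n₂ : ℕ} (hn : 0 < n₃) (A : Tensor Quat n₁ n₂ n₃) (k : Fin n₃)
    (i : Fin n₁) (j : Fin n₂) :
    hatT A k i j = ∑ t : Fin n₃, c2q (eE n₃ (((k:ℕ):ℤ) * ((t:ℕ):ℤ))) * A t i j := by
  rw [hatT]
  have h1 : ((Real.sqrt (n₃:ℝ) : ℝ) : ℂ) * ∑ t, Fmat n₃ k t * Td A t i j
      = ∑ t : Fin n₃, eE n₃ (((k:ℕ):ℤ) * ((t:ℕ):ℤ)) * Td A t i j := by
    rw [Finset.mul_sum]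
    refine Finset.sum_congr rfl fun t _ => ?_
    rw [← mul_assoc, sqrtF hn]
  have h2 : ((Real.sqrt (n₃:ℝ) : ℝ) : ℂ) * ∑ t, (Pmat n₃ * Fmat n₃) k t * Tc A t i j
      = ∑ t : Fin n₃, eE n₃ (-(((k:ℕ):ℤ) * ((t:ℕ):ℤ))) * Tc A t i j := by
    rw [Finset.mul_sum]
    refine Finset.sum_congr rfl fun t _ => ?_
    rw [← mul_assoc, pmatF hn, sqrtF hn]
    congr 1
    have hd := fin_neg_dvd hn k
    refine eE_congr hn ?_
    have : ((((-k : Fin n₃):ℕ):ℤ) * ((t:ℕ):ℤ)) - (-(((k:ℕ):ℤ) * ((t:ℕ):ℤ)))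
        = ((((-k : Fin n₃):ℕ):ℤ) + ((k:ℕ):ℤ)) * ((t:ℕ):ℤ) := by push_cast; ring
    rw [this]
    exact Dvd.dvd.mul_right hd _
  rw [h1, h2, c2q_sum, c2q_sum, Finset.mul_sum, ← Finset.sum_add_distrib]
  refine Finset.sum_congr rfl fun t _ => ?_
  rw [c2q_mul_q, eE_conj]
  rfl

end Hat


section Down

variable {n₃ : ℕ}

/-- The inverse mode-3 transform. -/
def downT {n₁ n₂ : ℕ} (S : Tensor Quat n₁ n₂ n₃) : Tensor Quat n₁ n₂ n₃ :=
  fun m i j => ∑ t : Fin n₃,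
    c2q ((n₃:ℂ)⁻¹ * eE n₃ (-(((t:ℕ):ℤ) * ((m:ℕ):ℤ)))) * S t i j

/-- Core collapse: a weighted sum whose complex weights form a delta. -/
lemma core_collapse (hn : 0 < n₃) (l₀ : Fin n₃) (a : Fin n₃ → ℤ)
    (ha : ∀ l, ((n₃:ℤ) ∣ a l) ↔ l = l₀) (g : Fin n₃ → Quat) :
    ∑ l : Fin n₃, c2q ((n₃:ℂ)⁻¹ * ∑ t : Fin n₃, eE n₃ (a l * ((t:ℕ):ℤ))) * g l = g l₀ := by
  have hn' : ((n₃:ℂ)) ≠ 0 := by exact_mod_cast hn.ne'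
  rw [Finset.sum_eq_single l₀]
  · rw [orth n₃ hn, if_pos ((ha l₀).mpr rfl), inv_mul_cancel₀ hn', c2q_one, one_mul]
  · intro l _ hl
    rw [orth n₃ hn, if_neg (fun h => hl ((ha l).mp h)), mul_zero, c2q_zero, zero_mul]
  · intro h
    exact absurd (Finset.mem_univ _) h

lemma hat_down {n₁ n₂ : ℕ} (hn : 0 < n₃) (S : Tensor Quat n₁ n₂ n₃) (k : Fin n₃)
    (i : Fin n₁) (j : Fin n₂) : hatT (downT S) k i j = S k i j := by
  rw [hat_eq hn]
  have hstep : ∀ t : Fin n₃,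
      c2q (eE n₃ (((k:ℕ):ℤ) * ((t:ℕ):ℤ))) * downT S t i j
      = ∑ l : Fin n₃, c2q ((n₃:ℂ)⁻¹ * eE n₃ ((((k:ℕ):ℤ) - ((l:ℕ):ℤ)) * ((t:ℕ):ℤ))) * S l i j := by
    intro t
    rw [downT, Finset.mul_sum]
    refine Finset.sum_congr rfl fun l _ => ?_
    rw [← mul_assoc, ← c2q_mul]
    congr 2
    rw [show (((k:ℕ):ℤ) - ((l:ℕ):ℤ)) * ((t:ℕ):ℤ)
        = ((k:ℕ):ℤ) * ((t:ℕ):ℤ) + (-(((l:ℕ):ℤ) * ((t:ℕ):ℤ))) by ring, eE_add]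
    ring
  simp_rw [hstep]
  rw [Finset.sum_comm]
  have hstep2 : ∀ l : Fin n₃,
      (∑ t : Fin n₃, c2q ((n₃:ℂ)⁻¹ * eE n₃ ((((k:ℕ):ℤ) - ((l:ℕ):ℤ)) * ((t:ℕ):ℤ))) * S l i j)
      = c2q ((n₃:ℂ)⁻¹ * ∑ t : Fin n₃, eE n₃ ((((k:ℕ):ℤ) - ((l:ℕ):ℤ)) * ((t:ℕ):ℤ))) * S l i j := by
    intro l
    rw [Finset.mul_sum, c2q_sum, Finset.sum_mul]
  simp_rw [hstep2]
  exact core_collapse hn k _ (fun l => by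
    constructor
    · intro h
      refine (fin_eq_of_dvd hn l k ?_)
      rw [show ((l:ℕ):ℤ) - ((k:ℕ):ℤ) = -(((k:ℕ):ℤ) - ((l:ℕ):ℤ)) by ring]
      exact dvd_neg.mpr h
    · rintro rfl
      simp) (fun l => S l i j)

lemma down_hat {n₁ n₂ : ℕ} (hn : 0 < n₃) (A : Tensor Quat n₁ n₂ n₃) (m : Fin n₃)
    (i : Fin n₁) (j : Fin n₂) : downT (hatT A) m i j = A m i j := by
  rw [downT]
  have hstep : ∀ l : Fin n₃,
      c2q ((n₃:ℂ)⁻¹ * eE n₃ (-(((l:ℕ):ℤ) * ((m:ℕ):ℤ)))) * hatT A l i j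
      = ∑ t : Fin n₃, c2q ((n₃:ℂ)⁻¹ * eE n₃ ((((t:ℕ):ℤ) - ((m:ℕ):ℤ)) * ((l:ℕ):ℤ))) * A t i j := by
    intro l
    rw [hat_eq hn, Finset.mul_sum]
    refine Finset.sum_congr rfl fun t _ => ?_
    rw [← mul_assoc, ← c2q_mul]
    congr 2
    rw [show ((((t:ℕ):ℤ) - ((m:ℕ):ℤ)) * ((l:ℕ):ℤ))
        = (-(((l:ℕ):ℤ) * ((m:ℕ):ℤ))) + ((l:ℕ):ℤ) * ((t:ℕ):ℤ) by ring, eE_add]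
    ring
  simp_rw [hstep]
  rw [Finset.sum_comm]
  have hstep2 : ∀ t : Fin n₃,
      (∑ l : Fin n₃, c2q ((n₃:ℂ)⁻¹ * eE n₃ ((((t:ℕ):ℤ) - ((m:ℕ):ℤ)) * ((l:ℕ):ℤ))) * A t i j)
      = c2q ((n₃:ℂ)⁻¹ * ∑ l : Fin n₃, eE n₃ ((((t:ℕ):ℤ) - ((m:ℕ):ℤ)) * ((l:ℕ):ℤ))) * A t i j := by
    intro t
    rw [Finset.mul_sum, c2q_sum, Finset.sum_mul]
  simp_rw [hstep2]
  exact core_collapse hn m _ (fun t => by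
    constructor
    · intro h
      exact fin_eq_of_dvd hn t m (by omega)
    · rintro rfl
      simp) (fun t => A t i j)

end Down


section Mul

variable {n₃ : ℕ}

lemma shuffle1 (x y z : ℂ) (w : Quat) :
    c2q (x*y) * (c2q z * w) = (c2q x * c2q z) * (c2q y * w) := by
  rw [c2q_mul, mul_assoc, ← mul_assoc (c2q y), c2q_comm y z, mul_assoc, ← mul_assoc,
    ← mul_assoc]

lemma shuffle2 (u v z : ℂ) (w : Quat) :
    c2q ((starRingEnd ℂ) (u * v)) * ((jH * c2q z) * w) = (jH * c2q u * c2q z) * (c2q v * w) := by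
  have h1 : c2q ((starRingEnd ℂ) (u * v)) * jH = jH * c2q (u * v) := by
    rw [c2q_mul_jH]
    simp
  calc c2q ((starRingEnd ℂ) (u * v)) * ((jH * c2q z) * w)
      = (c2q ((starRingEnd ℂ) (u * v)) * jH) * (c2q z * w) := by
        rw [← mul_assoc, ← mul_assoc, mul_assoc _ (c2q z) w]
    _ = jH * (c2q (u * v) * (c2q z * w)) := by rw [h1, mul_assoc]
    _ = jH * ((c2q u * c2q z) * (c2q v * w)) := by rw [shuffle1]
    _ = (jH * c2q u * c2q z) * (c2q v * w) := by
        rw [← mul_assoc]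
        rw [mul_assoc jH (c2q u) (c2q z)]

lemma bcircz_apply_s8 {n₁ n₂ : ℕ} (hn : 0 < n₃) (A : Tensor Quat n₁ n₂ n₃) (m t : Fin n₃)
    (i : Fin n₁) (l : Fin n₂) :
    bcircz A (m, i) (t, l) = c2q (Td A (m - t) i l) + jH * c2q (Tc A (m + t) i l) := by
  haveI : NeZero n₃ := ⟨hn.ne'⟩
  have hmain : (bcirc (Tc A) * (Pmat n₃ ⊗ₖ (1 : Matrix (Fin n₂) (Fin n₂) ℂ))) (m, i) (t, l)
      = Tc A (m + t) i l := by
    rw [Matrix.mul_apply, Fintype.sum_prod_type]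
    have hinner : ∀ s : Fin n₃,
        (∑ l' : Fin n₂, bcirc (Tc A) (m, i) (s, l') *
          (Pmat n₃ ⊗ₖ (1 : Matrix (Fin n₂) (Fin n₂) ℂ)) (s, l') (t, l))
        = Tc A (m - s) i l * Pmat n₃ s t := by
      intro s
      rw [Finset.sum_eq_single l]
      · rw [Matrix.kroneckerMap_apply, Matrix.one_apply_eq, mul_one]
        rfl
      · intro l' _ hl'
        rw [Matrix.kroneckerMap_apply, Matrix.one_apply_ne hl', mul_zero, mul_zero]
      · intro h
        exact absurd (Finset.mem_univ _) h
    simp_rw [hinner]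
    rw [Finset.sum_eq_single (-t)]
    · have hcond : (((-t : Fin n₃):ℕ) + (t:ℕ)) % n₃ = 0 := by
        rw [pmat_iff hn (-t) t]
      rw [Pmat]
      simp only [hcond, if_true, mul_one, sub_neg_eq_add]
    · intro s _ hs
      have hcond : ¬ (((s:ℕ) + (t:ℕ)) % n₃ = 0) := by
        rw [pmat_iff hn s t]
        exact hs
      rw [Pmat]
      simp only [hcond, if_false, mul_zero]
    · intro h
      exact absurd (Finset.mem_univ _) h
  rw [bcircz, Matrix.add_apply, Matrix.map_apply]
  show c2q (bcirc (Td A) (m, i) (t, l)) + jH * c2q (_ : ℂ) = _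
  rw [hmain]
  rfl

lemma hat_mul {n₁ r n₂ : ℕ} (hn : 0 < n₃) (A : Tensor Quat n₁ r n₃) (B : Tensor Quat r n₂ n₃)
    (k : Fin n₃) (i : Fin n₁) (j : Fin n₂) :
    hatT (qtmul A B) k i j = ∑ l : Fin r, hatT A k i l * hatT B k l j := by
  haveI : NeZero n₃ := ⟨hn.ne'⟩
  have hRHS : ∑ l : Fin r, hatT A k i l * hatT B k l j
      = ∑ l : Fin r, ∑ s : Fin n₃, ∑ t : Fin n₃,
          (c2q (eE n₃ (((k:ℕ):ℤ) * ((s:ℕ):ℤ))) * A s i l) *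
          (c2q (eE n₃ (((k:ℕ):ℤ) * ((t:ℕ):ℤ))) * B t l j) := by
    refine Finset.sum_congr rfl fun l _ => ?_
    rw [hat_eq hn A, hat_eq hn B, Finset.sum_mul_sum]
  rw [hRHS, hat_eq hn]
  have hqt : ∀ m : Fin n₃, qtmul A B m i j
      = ∑ t : Fin n₃, ∑ l : Fin r,
          (c2q (Td A (m - t) i l) + jH * c2q (Tc A (m + t) i l)) * B t l j := by
    intro m
    show (bcircz A * unfoldT B) (m, i) j = _
    rw [Matrix.mul_apply, Fintype.sum_prod_type]
    refine Finset.sum_congr rfl fun t _ => Finset.sum_congr rfl fun l _ => ?_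
    rw [bcircz_apply_s8 hn]
    rfl
  simp_rw [hqt, Finset.mul_sum]
  -- now LHS = ∑ m ∑ t ∑ l  c2q(e(km)) * ((c2q(Ad (m-t) i l) + jH c2q(Ac (m+t) i l)) * B t l j)
  rw [Finset.sum_comm]
  -- ∑ t ∑ m ∑ l
  have hswap : ∀ t : Fin n₃,
      (∑ m : Fin n₃, ∑ l : Fin r, c2q (eE n₃ (((k:ℕ):ℤ) * ((m:ℕ):ℤ))) *
        ((c2q (Td A (m - t) i l) + jH * c2q (Tc A (m + t) i l)) * B t l j))
      = ∑ l : Fin r, ∑ m : Fin n₃, c2q (eE n₃ (((k:ℕ):ℤ) * ((m:ℕ):ℤ))) *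
        ((c2q (Td A (m - t) i l) + jH * c2q (Tc A (m + t) i l)) * B t l j) :=
    fun t => Finset.sum_comm
  simp_rw [hswap]
  rw [Finset.sum_comm]
  -- ∑ l ∑ t ∑ m
  refine Finset.sum_congr rfl fun l _ => ?_
  rw [Finset.sum_comm]
  -- LHS_l = ∑ m ∑ t term(m,t);  RHS_l = ∑ s ∑ t rterm(s,t)
  rw [Finset.sum_comm]
  -- LHS_l = ∑ t ∑ m term(m,t)
  have hinner : ∀ t : Fin n₃,
      (∑ m : Fin n₃, c2q (eE n₃ (((k:ℕ):ℤ) * ((m:ℕ):ℤ))) *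
        ((c2q (Td A (m - t) i l) + jH * c2q (Tc A (m + t) i l)) * B t l j))
      = ∑ s : Fin n₃, (c2q (eE n₃ (((k:ℕ):ℤ) * ((s:ℕ):ℤ))) * A s i l) *
          (c2q (eE n₃ (((k:ℕ):ℤ) * ((t:ℕ):ℤ))) * B t l j) := by
    intro t
    have hsplit : ∀ m : Fin n₃, c2q (eE n₃ (((k:ℕ):ℤ) * ((m:ℕ):ℤ))) *
        ((c2q (Td A (m - t) i l) + jH * c2q (Tc A (m + t) i l)) * B t l j)
        = c2q (eE n₃ (((k:ℕ):ℤ) * ((m:ℕ):ℤ))) * (c2q (Td A (m - t) i l) * B t l j)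
          + c2q (eE n₃ (((k:ℕ):ℤ) * ((m:ℕ):ℤ))) *
            ((jH * c2q (Tc A (m + t) i l)) * B t l j) := by
      intro m
      rw [add_mul, mul_add]
    simp_rw [hsplit]
    rw [Finset.sum_add_distrib]
    have h1 : (∑ m : Fin n₃, c2q (eE n₃ (((k:ℕ):ℤ) * ((m:ℕ):ℤ))) *
          (c2q (Td A (m - t) i l) * B t l j))
        = ∑ s : Fin n₃, (c2q (eE n₃ (((k:ℕ):ℤ) * ((s:ℕ):ℤ))) * c2q (Td A s i l)) *
            (c2q (eE n₃ (((k:ℕ):ℤ) * ((t:ℕ):ℤ))) * B t l j) := by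
      refine Fintype.sum_equiv (Equiv.subRight t) _ _ fun m => ?_
      show c2q (eE n₃ (((k:ℕ):ℤ) * ((m:ℕ):ℤ))) * (c2q (Td A (m - t) i l) * B t l j)
        = (c2q (eE n₃ (((k:ℕ):ℤ) * (((m - t : Fin n₃):ℕ):ℤ))) * c2q (Td A (m - t) i l)) *
            (c2q (eE n₃ (((k:ℕ):ℤ) * ((t:ℕ):ℤ))) * B t l j)
      have hee : eE n₃ (((k:ℕ):ℤ) * ((m:ℕ):ℤ))
          = eE n₃ (((k:ℕ):ℤ) * (((m - t : Fin n₃):ℕ):ℤ)) * eE n₃ (((k:ℕ):ℤ) * ((t:ℕ):ℤ)) := by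
        rw [← eE_add]
        refine eE_congr hn ?_
        have hd := fin_sub_dvd hn m t
        have : (((k:ℕ):ℤ) * ((m:ℕ):ℤ)) -
            (((k:ℕ):ℤ) * (((m - t : Fin n₃):ℕ):ℤ) + ((k:ℕ):ℤ) * ((t:ℕ):ℤ))
            = (-((k:ℕ):ℤ)) * ((((m - t : Fin n₃):ℕ):ℤ) - (((m:ℕ):ℤ) - ((t:ℕ):ℤ))) := by ring
        rw [this]
        exact Dvd.dvd.mul_left hd _
      rw [hee, shuffle1]
    have h2 : (∑ m : Fin n₃, c2q (eE n₃ (((k:ℕ):ℤ) * ((m:ℕ):ℤ))) *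
          ((jH * c2q (Tc A (m + t) i l)) * B t l j))
        = ∑ s : Fin n₃, (jH * c2q (eE n₃ (-(((k:ℕ):ℤ) * ((s:ℕ):ℤ)))) * c2q (Tc A s i l)) *
            (c2q (eE n₃ (((k:ℕ):ℤ) * ((t:ℕ):ℤ))) * B t l j) := by
      refine Fintype.sum_equiv (Equiv.addRight t) _ _ fun m => ?_
      show c2q (eE n₃ (((k:ℕ):ℤ) * ((m:ℕ):ℤ))) * ((jH * c2q (Tc A (m + t) i l)) * B t l j)
        = (jH * c2q (eE n₃ (-(((k:ℕ):ℤ) * (((m + t : Fin n₃):ℕ):ℤ)))) * c2q (Tc A (m + t) i l)) *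
            (c2q (eE n₃ (((k:ℕ):ℤ) * ((t:ℕ):ℤ))) * B t l j)
      have hee : eE n₃ (((k:ℕ):ℤ) * ((m:ℕ):ℤ))
          = (starRingEnd ℂ) (eE n₃ (-(((k:ℕ):ℤ) * (((m + t : Fin n₃):ℕ):ℤ))) *
              eE n₃ (((k:ℕ):ℤ) * ((t:ℕ):ℤ))) := by
        rw [_root_.map_mul, eE_conj, eE_conj, neg_neg, ← eE_add]
        refine eE_congr hn ?_
        have hd := fin_add_dvd hn m t
        have : (((k:ℕ):ℤ) * ((m:ℕ):ℤ)) -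
            (((k:ℕ):ℤ) * (((m + t : Fin n₃):ℕ):ℤ) + -(((k:ℕ):ℤ) * ((t:ℕ):ℤ)))
            = (-((k:ℕ):ℤ)) * ((((m + t : Fin n₃):ℕ):ℤ) - (((m:ℕ):ℤ) + ((t:ℕ):ℤ))) := by ring
        rw [this]
        exact Dvd.dvd.mul_left hd _
      rw [hee, shuffle2]
    rw [h1, h2, ← Finset.sum_add_distrib]
    refine Finset.sum_congr rfl fun s _ => ?_
    rw [← add_mul]
    congr 1
    have := c2q_mul_q (eE n₃ (((k:ℕ):ℤ) * ((s:ℕ):ℤ))) (A s i l)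
    rw [c2q_mul, eE_conj, c2q_mul, ← mul_assoc] at this
    exact this.symm
  simp_rw [hinner]
  rw [Finset.sum_comm]

end Mul


section PLU

variable {K : Type*} [DivisionRing K]

/-- Extend a permutation of `Fin n` to `Fin (n+1)` fixing `0`. -/
def extPerm {n : ℕ} (σ : Equiv.Perm (Fin n)) : Equiv.Perm (Fin (n+1)) where
  toFun := Fin.cases 0 (fun i => (σ i).succ)
  invFun := Fin.cases 0 (fun i => (σ.symm i).succ)
  left_inv := by
    intro x
    refine Fin.cases ?_ (fun i => ?_) x <;> simp
  right_inv := by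
    intro x
    refine Fin.cases ?_ (fun i => ?_) x <;> simp

@[simp] lemma extPerm_zero {n : ℕ} (σ : Equiv.Perm (Fin n)) : extPerm σ 0 = 0 := rfl

@[simp] lemma extPerm_succ {n : ℕ} (σ : Equiv.Perm (Fin n)) (i : Fin n) :
    extPerm σ i.succ = (σ i).succ := by
  simp [extPerm]

@[simp] lemma extPerm_symm_zero {n : ℕ} (σ : Equiv.Perm (Fin n)) : (extPerm σ).symm 0 = 0 := rfl

@[simp] lemma extPerm_symm_succ {n : ℕ} (σ : Equiv.Perm (Fin n)) (i : Fin n) :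
    (extPerm σ).symm i.succ = (σ.symm i).succ := by
  simp [extPerm]

/-- PLU decomposition over a division ring. -/
lemma plu : ∀ (n : ℕ) (M : Matrix (Fin n) (Fin n) K),
    ∃ (σ : Equiv.Perm (Fin n)) (L U : Matrix (Fin n) (Fin n) K),
      (∀ i j : Fin n, (i:ℕ) < (j:ℕ) → L i j = 0) ∧ (∀ i, L i i = 1) ∧
      (∀ i j : Fin n, (j:ℕ) < (i:ℕ) → U i j = 0) ∧
      (∀ i j, M (σ.symm i) j = ∑ l, L i l * U l j) := by
  intro n
  induction n with
  | zero =>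
    intro M
    exact ⟨1, 1, 1, fun i => i.elim0, fun i => i.elim0, fun i => i.elim0, fun i => i.elim0⟩
  | succ n ih =>
    intro M
    classical
    obtain ⟨τ, hτ⟩ : ∃ τ : Equiv.Perm (Fin (n+1)),
        (M (τ 0) 0 = 0 → ∀ i, M (τ i) 0 = 0) := by
      by_cases hc : ∃ i, M i 0 ≠ 0
      · obtain ⟨i₀, hi₀⟩ := hc
        refine ⟨Equiv.swap 0 i₀, fun h => ?_⟩
        rw [Equiv.swap_apply_left] at h
        exact absurd h hi₀
      · push_neg at hc
        exact ⟨1, fun _ i => hc i⟩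
    set N : Matrix (Fin (n+1)) (Fin (n+1)) K := fun i j => M (τ i) j with hN
    have hpivot : N 0 0 = 0 → ∀ i, N i 0 = 0 := hτ
    set c : Fin n → K := fun i => N i.succ 0 * (N 0 0)⁻¹ with hc
    have hcp : ∀ i, c i * N 0 0 = N i.succ 0 := by
      intro i
      by_cases hp : N 0 0 = 0
      · rw [hp, mul_zero, hpivot hp]
      · rw [hc]
        exact inv_mul_cancel_right₀ hp _
    set M₂ : Matrix (Fin n) (Fin n) K :=
      fun i j => N i.succ j.succ - c i * N 0 j.succ with hM₂
    obtain ⟨σ₂, L₂, U₂, hL₂, hLd₂, hU₂, hEq₂⟩ := ih M₂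
    set LL : Matrix (Fin (n+1)) (Fin (n+1)) K := Matrix.of (fun i j =>
      Fin.cases (Fin.cases (1:K) (fun _ => (0:K)) j)
        (fun i' => Fin.cases (c (σ₂.symm i')) (fun j' => L₂ i' j') j) i) with hLL
    set UU : Matrix (Fin (n+1)) (Fin (n+1)) K := Matrix.of (fun i j =>
      Fin.cases (N 0 j)
        (fun i' => Fin.cases (0:K) (fun j' => U₂ i' j') j) i) with hUU
    have hLL00 : LL 0 0 = 1 := rfl
    have hLL0s : ∀ j' : Fin n, LL 0 j'.succ = 0 := by
      intro j'; simp [hLL]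
    have hLLs0 : ∀ i' : Fin n, LL i'.succ 0 = c (σ₂.symm i') := by
      intro i'; simp [hLL]
    have hLLss : ∀ i' j' : Fin n, LL i'.succ j'.succ = L₂ i' j' := by
      intro i' j'; simp [hLL]
    have hUU0 : ∀ j, UU 0 j = N 0 j := by
      intro j; simp [hUU]
    have hUUs0 : ∀ i' : Fin n, UU i'.succ 0 = 0 := by
      intro i'; simp [hUU]
    have hUUss : ∀ i' j' : Fin n, UU i'.succ j'.succ = U₂ i' j' := by
      intro i' j'; simp [hUU]
    refine ⟨(τ.symm).trans (extPerm σ₂), LL, UU, ?_, ?_, ?_, ?_⟩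
    · intro i j
      refine Fin.cases ?_ (fun i' => ?_) i <;> refine Fin.cases ?_ (fun j' => ?_) j <;>
        intro hij
      · simp at hij
      · exact hLL0s j'
      · simp [Fin.val_succ] at hij
      · rw [hLLss]
        exact hL₂ i' j' (by simp [Fin.val_succ] at hij; exact hij)
    · intro i
      refine Fin.cases ?_ (fun i' => ?_) i
      · exact hLL00
      · rw [hLLss]; exact hLd₂ i'
    · intro i j
      refine Fin.cases ?_ (fun i' => ?_) i <;> refine Fin.cases ?_ (fun j' => ?_) j <;>
        intro hij
      · simp at hij
      · simp [Fin.val_succ] at hij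
      · exact hUUs0 i'
      · rw [hUUss]
        exact hU₂ i' j' (by simp [Fin.val_succ] at hij; exact hij)
    · intro i j
      have hsymm : ((τ.symm).trans (extPerm σ₂)).symm i = τ ((extPerm σ₂).symm i) := by
        simp [Equiv.symm_trans_apply]
      rw [hsymm]
      show N ((extPerm σ₂).symm i) j = _
      refine Fin.cases ?_ (fun i' => ?_) i
      · rw [extPerm_symm_zero, Fin.sum_univ_succ, hLL00, one_mul, hUU0]
        have hz : ∀ l : Fin n, LL 0 l.succ * UU l.succ j = 0 := by
          intro l
          rw [hLL0s, zero_mul]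
        simp only [hz, Finset.sum_const_zero, add_zero]
      · rw [extPerm_symm_succ, Fin.sum_univ_succ, hLLs0, hUU0]
        refine Fin.cases ?_ (fun j' => ?_) j
        · have hz : ∀ l : Fin n, LL i'.succ l.succ * UU l.succ 0 = 0 := by
            intro l
            rw [hUUs0, mul_zero]
          simp only [hz, Finset.sum_const_zero, add_zero]
          exact (hcp (σ₂.symm i')).symm
        · have hu : ∀ l : Fin n, LL i'.succ l.succ * UU l.succ j'.succ = L₂ i' l * U₂ l j' := by
            intro l
            rw [hLLss, hUUss]
          simp only [hu]
          rw [← hEq₂ i' j', hM₂]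
          simp
end PLU

/-- QT-PLU decomposition: there exist `P` (whose mode-3 quaternion
DFT is an f-permutation tensor), a unit f-lower-triangular `L`, and an
f-upper-triangular `U` with `P *_Q A = L *_Q U`. -/
theorem stmt8 {n n₃ : ℕ} (A : Tensor Quat n n n₃) :
    ∃ P L U : Tensor Quat n n n₃,
      (∃ σ : Fin n₃ → Equiv.Perm (Fin n),
        ∀ (k : Fin n₃) (i j : Fin n), hatT P k i j = if i = σ k j then 1 else 0) ∧
      (∀ (k : Fin n₃) (i j : Fin n), (i : ℕ) < (j : ℕ) → L k i j = 0) ∧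
      (∀ (k : Fin n₃), (k : ℕ) = 0 → ∀ i : Fin n, L k i i = 1) ∧
      (∀ (k : Fin n₃) (i j : Fin n), (j : ℕ) < (i : ℕ) → U k i j = 0) ∧
      qtmul P A = qtmul L U := by
  classical
  rcases Nat.eq_zero_or_pos n₃ with hn | hn
  · subst hn
    refine ⟨A, A, A, ⟨fun _ => 1, fun k => k.elim0⟩, fun k => k.elim0, fun k => k.elim0,
      fun k => k.elim0, funext fun k => k.elim0⟩
  · haveI : NeZero n₃ := ⟨hn.ne'⟩
    -- slice-wise PLU of the hat transform of A
    choose σ Lh Uh hLlow hLdiag hUup hEq using fun k : Fin n₃ => plu n (hatT A k)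
    set Sp : Tensor Quat n n n₃ :=
      fun k i j => if i = σ k j then (1 : Quat) else 0 with hSp
    set P : Tensor Quat n n n₃ := downT Sp with hP
    set L : Tensor Quat n n n₃ := downT Lh with hL
    set U : Tensor Quat n n n₃ := downT Uh with hU
    have hhatP : ∀ (k : Fin n₃) (i j : Fin n), hatT P k i j = if i = σ k j then 1 else 0 :=
      fun k i j => hat_down hn Sp k i j
    refine ⟨P, L, U, ⟨σ, hhatP⟩, ?_, ?_, ?_, ?_⟩
    · -- L lower triangular
      intro k i j hij
      rw [hL, downT]
      have : ∀ t : Fin n₃,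
          c2q ((n₃:ℂ)⁻¹ * eE n₃ (-(((t:ℕ):ℤ) * ((k:ℕ):ℤ)))) * Lh t i j = 0 := by
        intro t
        rw [hLlow t i j hij, mul_zero]
      simp only [this, Finset.sum_const_zero]
    · -- first slice of L has unit diagonal
      intro k hk i
      rw [hL, downT]
      have hz : ∀ t : Fin n₃,
          c2q ((n₃:ℂ)⁻¹ * eE n₃ (-(((t:ℕ):ℤ) * ((k:ℕ):ℤ)))) * Lh t i i
          = c2q ((n₃:ℂ)⁻¹) := by
        intro t
        rw [hLdiag t i, mul_one, hk]
        norm_num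
        rw [eE_zero, mul_one]
      simp only [hz, Finset.sum_const, Finset.card_univ, Fintype.card_fin]
      have hn' : ((n₃:ℂ)) ≠ 0 := by exact_mod_cast hn.ne'
      rw [nsmul_eq_mul, ← c2q_natCast, ← c2q_mul, mul_inv_cancel₀ hn', c2q_one]
    · -- U upper triangular
      intro k i j hij
      rw [hU, downT]
      have : ∀ t : Fin n₃,
          c2q ((n₃:ℂ)⁻¹ * eE n₃ (-(((t:ℕ):ℤ) * ((k:ℕ):ℤ)))) * Uh t i j = 0 := by
        intro t
        rw [hUup t i j hij, mul_zero]
      simp only [this, Finset.sum_const_zero]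
    · -- the equation
      have hslice : ∀ (k : Fin n₃) (i j : Fin n),
          hatT (qtmul P A) k i j = hatT (qtmul L U) k i j := by
        intro k i j
        rw [hat_mul hn P A, hat_mul hn L U]
        have h1 : ∀ l : Fin n, hatT P k i l * hatT A k l j
            = (if i = σ k l then (1:Quat) else 0) * hatT A k l j := by
          intro l
          rw [hhatP]
        simp_rw [h1]
        have h2 : (∑ l : Fin n, (if i = σ k l then (1:Quat) else 0) * hatT A k l j)
            = hatT A k ((σ k).symm i) j := by
          rw [Finset.sum_eq_single ((σ k).symm i)]
          · rw [if_pos (by simp), one_mul]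
          · intro l _ hl
            rw [if_neg, zero_mul]
            intro h
            exact hl (by rw [h, Equiv.symm_apply_apply])
          · intro h
            exact absurd (Finset.mem_univ _) h
        rw [h2, hEq k i j]
        refine Finset.sum_congr rfl fun l _ => ?_
        rw [show Lh k i l = hatT L k i l from (hat_down hn Lh k i l).symm,
          show Uh k l j = hatT U k l j from (hat_down hn Uh k l j).symm]
      refine funext fun k => Matrix.ext fun i j => ?_
      calc qtmul P A k i j = downT (hatT (qtmul P A)) k i j := (down_hat hn _ k i j).symm
        _ = downT (hatT (qtmul L U)) k i j := by
            rw [downT, downT]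
            refine Finset.sum_congr rfl fun t _ => ?_
            rw [hslice t i j]
        _ = qtmul L U k i j := down_hat hn _ k i j

end
end
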